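/- For the elephant random walk with p > 3/4, E[X_n^2] ~ n^{4p-2}/((4p-3) Γ(4p-2)) as n → ∞ (superdiffusive regime). -/

import Mathlib

/-!
Conditioning on the first `n` steps gives `E[η_{n+1} | η_1, …, η_n] = (2p - 1) X_n / n`, hence
`m_n = E[X_n²]` solves the linear recurrence `m_{n+1} = (1 + (4p - 2)/n) m_n + 1`, `m_1 = 1`.
Its solution is `m_n = n/(4p - 3) · (Γ(n + 4p - 2)/(Γ(4p - 2) n!) - 1)`, and Euler's limit
formula for `Γ` gives `Γ(n + 4p - 2) ~ n! n^{4p-3}`. For `p > 3/4` the exponent `4p - 3` is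
positive, so the term `-1` is negligible.
-/

open MeasureTheory ProbabilityTheory Filter

/-- `a_n` coefficients of the ERW: `a_1 = 1` and
`a_n = Γ(n + 2p - 1)/(Γ(n) Γ(2p))` for `n ≥ 2`. -/
noncomputable def aERW (p : ℝ) (n : ℕ) : ℝ :=
  if n ≤ 1 then 1 else Real.Gamma ((n : ℝ) + (2 * p - 1)) / (Real.Gamma n * Real.Gamma (2 * p))

/-- `s_n^2 = q(1-q) + ∑_{j=2}^n a_j^{-2}`. -/
noncomputable def sSqERW (p q : ℝ) (n : ℕ) : ℝ :=
  q * (1 - q) + ∑ j ∈ Finset.Icc 2 n, ((aERW p j)⁻¹) ^ 2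

/-- The elephant random walk: a sequence of ±1 increments `η n` (for `n ≥ 1`; we set `η 0 = 0`)
on a probability space, with first step `+1` with probability `q`, and conditional law of
`η_{n+1}` given `η_1, …, η_n` equal to `(1/(2n)) ∑_{k=1}^n (1 + (2p-1) η_k η)`. -/
structure IsERW {Ω : Type*} [MeasurableSpace Ω] (μ : Measure Ω)
    (p q : ℝ) (η : ℕ → Ω → ℝ) : Prop where
  isProb : IsProbabilityMeasure μ
  p_mem : p ∈ Set.Ioo (0 : ℝ) 1
  q_mem : q ∈ Set.Ioo (0 : ℝ) 1
  meas : ∀ n, Measurable (η n)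
  zero : ∀ ω, η 0 ω = 0
  pm_one : ∀ n, 1 ≤ n → ∀ ω, η n ω = 1 ∨ η n ω = -1
  first : μ {ω | η 1 ω = 1} = ENNReal.ofReal q
  cond : ∀ n, 1 ≤ n → ∀ e : ℝ, (e = 1 ∨ e = -1) →
    (μ[Set.indicator {ω | η (n + 1) ω = e} (fun _ => (1 : ℝ)) |
        MeasurableSpace.comap (fun ω (k : Finset.Icc 1 n) => η k ω) inferInstance])
      =ᵐ[μ] fun ω => (1 / (2 * (n : ℝ))) * ∑ k ∈ Finset.Icc 1 n, (1 + (2 * p - 1) * η k ω * e)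

/-- Position of the ERW at time `n`. -/
noncomputable def erwX {Ω : Type*} (η : ℕ → Ω → ℝ) (n : ℕ) (ω : Ω) : ℝ :=
  ∑ k ∈ Finset.Icc 1 n, η k ω

/-- A standard one-dimensional Brownian motion. -/
structure IsStdBM {Ω : Type*} [MeasurableSpace Ω] (μ : Measure Ω) (W : ℝ → Ω → ℝ) : Prop where
  isProb : IsProbabilityMeasure μ
  meas : ∀ t, Measurable (W t)
  init : ∀ᵐ ω ∂μ, W 0 ω = 0
  indep_incr : ∀ (n : ℕ) (t : ℕ → ℝ), Monotone t → 0 ≤ t 0 →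
    iIndepFun
      (fun i : Fin n => fun ω => W (t (i + 1)) ω - W (t i) ω) μ
  gauss_incr : ∀ s t : ℝ, 0 ≤ s → s ≤ t →
    Measure.map (fun ω => W t ω - W s ω) μ = gaussianReal 0 (Real.toNNReal (t - s))
  cont : ∀ᵐ ω ∂μ, Continuous fun t => W t ω

open scoped Nat

theorem ne_neg_natCast_of_pos {x : ℝ} (hx : 0 < x) (k : ℕ) : x ≠ -k :=
  ((neg_nonpos.2 k.cast_nonneg).trans_lt hx).ne'

theorem Real.Gamma_add_nat_eq_mul_prod {a : ℝ} (ha : ∀ k : ℕ, a ≠ -k) (m : ℕ) :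
    Real.Gamma (a + m) = Real.Gamma a * ∏ j ∈ Finset.range m, (a + j) := by
  induction m with
  | zero => simp
  | succ m ih =>
    have hne : a + m ≠ 0 := fun h => ha m (by linarith)
    rw [Nat.cast_succ, ← add_assoc, Real.Gamma_add_one hne, ih, Finset.prod_range_succ]
    ring

theorem Real.tendsto_Gamma_nat_add_add_one_div_factorial_mul_rpow {a : ℝ}
    (ha : ∀ k : ℕ, a ≠ -k) :
    Tendsto (fun n : ℕ => Real.Gamma (n + a + 1) / (n ! * (n : ℝ) ^ a)) atTop (nhds 1) := by
  have hΓ : Real.Gamma a ≠ 0 := Real.Gamma_ne_zero ha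
  have hlim := (tendsto_const_nhds (x := Real.Gamma a)).div (Real.GammaSeq_tendsto_Gamma a) hΓ
  rw [div_self hΓ] at hlim
  refine hlim.congr fun n => ?_
  rw [Pi.div_apply, Real.GammaSeq, show (n : ℝ) + a + 1 = a + (n + 1 : ℕ) by push_cast; ring,
    Real.Gamma_add_nat_eq_mul_prod ha, div_div_eq_mul_div, mul_comm ((n : ℝ) ^ a)]

noncomputable def secondMomentFormula (c : ℝ) (n : ℕ) : ℝ :=
  n / (c - 1) * (Real.Gamma (n + c) / (Real.Gamma c * n !) - 1)

theorem eq_secondMomentFormula_of_recurrence {c : ℝ} (hc : ∀ k : ℕ, c ≠ -k) (hc1 : c ≠ 1)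
    {m : ℕ → ℝ} (hm1 : m 1 = 1) (hrec : ∀ n, 1 ≤ n → m (n + 1) = (1 + c / n) * m n + 1)
    {n : ℕ} (hn : 1 ≤ n) : m n = secondMomentFormula c n := by
  have hΓ : Real.Gamma c ≠ 0 := Real.Gamma_ne_zero hc
  have hc1' : c - 1 ≠ 0 := sub_ne_zero.2 hc1
  induction n, hn using Nat.le_induction with
  | base =>
    rw [hm1, secondMomentFormula, Nat.cast_one, Nat.factorial_one, Nat.cast_one, add_comm,
      Real.Gamma_add_one (by simpa using hc 0)]
    field_simp
  | succ n hn ih =>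
    have hn0 : (n : ℝ) ≠ 0 := by positivity
    rw [hrec n hn, ih, secondMomentFormula, secondMomentFormula, Nat.cast_succ, add_right_comm,
      Real.Gamma_add_one fun h0 => hc n (by linarith), Nat.factorial_succ, Nat.cast_mul,
      Nat.cast_succ]
    field_simp
    ring

theorem tendsto_secondMomentFormula_div_rpow {c : ℝ} (hc : 1 < c) :
    Tendsto (fun n : ℕ => secondMomentFormula c n / ((n : ℝ) ^ c / ((c - 1) * Real.Gamma c)))
      atTop (nhds 1) := by
  have ha : 0 < c - 1 := sub_pos.2 hc
  have hΓ : Real.Gamma c ≠ 0 := (Real.Gamma_pos_of_pos (by linarith)).ne'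
  have hdecay : Tendsto (fun n : ℕ => Real.Gamma c * ((n : ℝ) ^ (c - 1))⁻¹) atTop (nhds 0) := by
    simpa using ((tendsto_rpow_atTop ha).comp tendsto_natCast_atTop_atTop).inv_tendsto_atTop
      |>.const_mul (Real.Gamma c)
  have hlim :=
    (Real.tendsto_Gamma_nat_add_add_one_div_factorial_mul_rpow (ne_neg_natCast_of_pos ha)).sub hdecay
  rw [sub_zero] at hlim
  refine hlim.congr' ?_
  filter_upwards [eventually_ge_atTop 1] with n hn
  have hn0 : (0 : ℝ) < n := by exact_mod_cast hn
  have hpow : (n : ℝ) ^ c = n * (n : ℝ) ^ (c - 1) := by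
    rw [← Real.rpow_one_add' hn0.le (by linarith), add_sub_cancel]
  have hpow0 : (n : ℝ) ^ (c - 1) ≠ 0 := (Real.rpow_pos_of_pos hn0 _).ne'
  rw [secondMomentFormula, hpow, show (n : ℝ) + (c - 1) + 1 = n + c by ring]
  field_simp

abbrev erwPast {Ω : Type*} (η : ℕ → Ω → ℝ) (n : ℕ) : MeasurableSpace Ω :=
  MeasurableSpace.comap (fun ω (k : Finset.Icc 1 n) => η k ω) inferInstance

theorem stronglyMeasurable_erwX_erwPast {Ω : Type*} (η : ℕ → Ω → ℝ) (n : ℕ) :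
    StronglyMeasurable[erwPast η n] (erwX η n) := by
  have hstep : ∀ k : Finset.Icc 1 n, Measurable[erwPast η n] (η k) := fun k =>
    (measurable_pi_apply k).comp (comap_measurable (fun ω (j : Finset.Icc 1 n) => η j ω))
  have hsum : erwX η n = fun ω => ∑ k ∈ (Finset.Icc 1 n).attach, η k ω := by
    funext ω
    exact (Finset.sum_attach _ _).symm
  rw [hsum]
  exact (Finset.measurable_sum _ fun k _ => hstep k).stronglyMeasurable

namespace IsERW

variable {Ω : Type*} [m0 : MeasurableSpace Ω] {μ : Measure Ω} {p q : ℝ} {η : ℕ → Ω → ℝ}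

theorem abs_le_one (h : IsERW μ p q η) (k : ℕ) (ω : Ω) : |η k ω| ≤ 1 := by
  rcases Nat.eq_zero_or_pos k with rfl | hk
  · simp [h.zero ω]
  · rcases h.pm_one k hk ω with h1 | h1 <;> simp [h1]

theorem sq_eq_one (h : IsERW μ p q η) {k : ℕ} (hk : 1 ≤ k) (ω : Ω) : η k ω ^ 2 = 1 := by
  rcases h.pm_one k hk ω with h1 | h1 <;> simp [h1]

theorem abs_erwX_le (h : IsERW μ p q η) (n : ℕ) (ω : Ω) : |erwX η n ω| ≤ n :=
  calc |erwX η n ω| ≤ ∑ k ∈ Finset.Icc 1 n, |η k ω| := Finset.abs_sum_le_sum_abs _ _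
    _ ≤ ∑ _k ∈ Finset.Icc 1 n, (1 : ℝ) := Finset.sum_le_sum fun k _ => h.abs_le_one k ω
    _ = n := by simp

theorem measurable_erwX (h : IsERW μ p q η) (n : ℕ) : Measurable (erwX η n) :=
  Finset.measurable_sum _ fun k _ => h.meas k

theorem erwPast_le (h : IsERW μ p q η) (n : ℕ) : erwPast η n ≤ m0 :=
  measurable_iff_comap_le.mp (measurable_pi_lambda _ fun k => h.meas k)

theorem integrable_indicator_eq (h : IsERW μ p q η) (k : ℕ) (e : ℝ) :
    Integrable (Set.indicator {ω | η k ω = e} (fun _ => (1 : ℝ))) μ :=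
  have := h.isProb
  (integrable_const 1).indicator (measurableSet_eq_fun (h.meas k) measurable_const)

theorem integrable_erwX_sq (h : IsERW μ p q η) (n : ℕ) :
    Integrable (fun ω => erwX η n ω ^ 2) μ :=
  have := h.isProb
  .of_bound ((h.measurable_erwX n).pow_const 2).aestronglyMeasurable ((n : ℝ) ^ 2) <|
    ae_of_all _ fun ω => by
      simpa [abs_pow] using pow_le_pow_left₀ (abs_nonneg _) (h.abs_erwX_le n ω) 2

theorem integrable_erwX_mul_succ (h : IsERW μ p q η) (n : ℕ) :
    Integrable (fun ω => erwX η n ω * η (n + 1) ω) μ :=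
  have := h.isProb
  .of_bound ((h.measurable_erwX n).mul (h.meas _)).aestronglyMeasurable n <|
    ae_of_all _ fun ω => by
      simpa [abs_mul] using mul_le_mul (h.abs_erwX_le n ω) (h.abs_le_one (n + 1) ω)
        (abs_nonneg _) (Nat.cast_nonneg n)

theorem condExp_succ (h : IsERW μ p q η) {n : ℕ} (hn : 1 ≤ n) :
    μ[η (n + 1) | erwPast η n] =ᵐ[μ] fun ω => (2 * p - 1) / n * erwX η n ω := by
  have hsplit : η (n + 1) = Set.indicator {ω | η (n + 1) ω = 1} (fun _ => (1 : ℝ))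
      - Set.indicator {ω | η (n + 1) ω = -1} (fun _ => (1 : ℝ)) := by
    funext ω
    rcases h.pm_one (n + 1) (by omega) ω with h1 | h1 <;> norm_num [Set.indicator_apply, h1]
  have hn0 : (n : ℝ) ≠ 0 := by positivity
  rw [hsplit]
  filter_upwards [condExp_sub (h.integrable_indicator_eq (n + 1) 1)
    (h.integrable_indicator_eq (n + 1) (-1)) (erwPast η n), h.cond n hn 1 (.inl rfl),
    h.cond n hn (-1) (.inr rfl)] with ω hsub hplus hminus
  rw [hsub, Pi.sub_apply, erwPast, hplus, hminus, ← mul_sub, ← Finset.sum_sub_distrib, erwX,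
    Finset.mul_sum, Finset.mul_sum]
  refine Finset.sum_congr rfl fun k _ => ?_
  field_simp
  ring

theorem integral_erwX_mul_succ (h : IsERW μ p q η) {n : ℕ} (hn : 1 ≤ n) :
    ∫ ω, erwX η n ω * η (n + 1) ω ∂μ = (2 * p - 1) / n * ∫ ω, erwX η n ω ^ 2 ∂μ := by
  have := h.isProb
  have hpull := condExp_mul_of_stronglyMeasurable_left (stronglyMeasurable_erwX_erwPast η n)
    (h.integrable_erwX_mul_succ n) (.of_bound (h.meas _).aestronglyMeasurable 1
      (ae_of_all _ (h.abs_le_one _)))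
  calc ∫ ω, erwX η n ω * η (n + 1) ω ∂μ
      = ∫ ω, (μ[erwX η n * η (n + 1) | erwPast η n]) ω ∂μ :=
        (integral_condExp (h.erwPast_le n)).symm
    _ = ∫ ω, (2 * p - 1) / n * erwX η n ω ^ 2 ∂μ := by
        refine integral_congr_ae ?_
        filter_upwards [hpull, h.condExp_succ hn] with ω hω hcond
        rw [hω, Pi.mul_apply, hcond]
        ring
    _ = (2 * p - 1) / n * ∫ ω, erwX η n ω ^ 2 ∂μ := integral_const_mul _ _

theorem integral_erwX_succ_sq (h : IsERW μ p q η) {n : ℕ} (hn : 1 ≤ n) :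
    ∫ ω, erwX η (n + 1) ω ^ 2 ∂μ = (1 + 2 * (2 * p - 1) / n) * ∫ ω, erwX η n ω ^ 2 ∂μ + 1 := by
  have := h.isProb
  have hexpand (ω : Ω) :
      erwX η (n + 1) ω ^ 2 = erwX η n ω ^ 2 + 2 * (erwX η n ω * η (n + 1) ω) + 1 := by
    rw [erwX, Finset.sum_Icc_succ_top (by omega), ← erwX]
    linear_combination h.sq_eq_one (k := n + 1) (by omega) ω
  have hsq := h.integrable_erwX_sq n
  have hcross := (h.integrable_erwX_mul_succ n).const_mul 2
  simp_rw [hexpand]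
  rw [integral_add (f := fun ω => erwX η n ω ^ 2 + 2 * (erwX η n ω * η (n + 1) ω))
    (hsq.add hcross) (integrable_const 1), integral_add hsq hcross,
    integral_const_mul, h.integral_erwX_mul_succ hn, integral_const, probReal_univ, one_smul]
  ring

theorem integral_erwX_one_sq (h : IsERW μ p q η) : ∫ ω, erwX η 1 ω ^ 2 ∂μ = 1 := by
  have := h.isProb
  simp [erwX, h.sq_eq_one le_rfl]

theorem integral_erwX_sq_eq_secondMomentFormula (h : IsERW μ p q η) (hp : 1 / 2 < p)
    (hp34 : p ≠ 3 / 4) {n : ℕ} (hn : 1 ≤ n) :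
    ∫ ω, erwX η n ω ^ 2 ∂μ = secondMomentFormula (4 * p - 2) n := by
  refine eq_secondMomentFormula_of_recurrence (m := fun n => ∫ ω, erwX η n ω ^ 2 ∂μ)
    (ne_neg_natCast_of_pos (by linarith))
    (fun h1 => hp34 (by linarith)) h.integral_erwX_one_sq (fun n hn => ?_) hn
  rw [h.integral_erwX_succ_sq hn]
  ring

end IsERW

/-- superdiffusive regime, `E[X_n^2] ~ n^{4p-2}/((4p-3)Γ(4p-2))` for `p > 3/4`. -/
theorem erw_second_moment_superdiffusive {Ω : Type*} [MeasurableSpace Ω] {μ : Measure Ω}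
    {p q : ℝ} {η : ℕ → Ω → ℝ} (h : IsERW μ p q η) (hp : 3 / 4 < p) :
    Tendsto (fun n : ℕ =>
        (∫ ω, (erwX η n ω) ^ 2 ∂μ) /
          ((n : ℝ) ^ (4 * p - 2) / ((4 * p - 3) * Real.Gamma (4 * p - 2))))
      atTop (nhds 1) := by
  have hlim := tendsto_secondMomentFormula_div_rpow (c := 4 * p - 2) (by linarith)
  rw [show 4 * p - 2 - 1 = 4 * p - 3 by ring] at hlim
  refine hlim.congr' ?_
  filter_upwards [eventually_ge_atTop 1] with n hn
  rw [h.integral_erwX_sq_eq_secondMomentFormula (by linarith) hp.ne' hn]
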